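/- arXiv:1302.5644 — 4 statements merged into one kernel-verified Lean document; each statement's English description precedes it below -/
import Mathlib

section
/- Let c ≠ 0 and let f, g : ℝ → ℝ be functions with sup_{u ∈ [u₀-ε, u₀+ε]} |f(u) - g(u)| ≤ η. Suppose g(u) = m + c(u - u₀) is affine. Then the set {u ∈ [u₀-ε, u₀+ε] : 1{f(u) ≤ 0} ≠ 1{g(u) ≤ 0}} is contained in an interval of length at most 2η/|c|, and consequently |∫_{u₀-ε}^{u₀+ε} (1{f(u) ≤ 0} - 1{g(u) ≤ 0}) du| ≤ 2η/|c|. -/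
/-!
Where the sign indicators of `f` and the affine `g` disagree, `g` lies between `0` and `f`, so
`|g u| ≤ |f u - g u| ≤ η`. Since `|g u| = |c| |u - s|` with `s = u₀ - m / c` the zero of `g`, such
`u` lie in `[s - η / |c|, s + η / |c|]`, and the integrand, bounded by `1`, vanishes off that interval.
-/

open MeasureTheory Set

lemma abs_le_abs_sub_of_not_iff_nonpos {x y : ℝ} (h : ¬(x ≤ 0 ↔ y ≤ 0)) : |y| ≤ |x - y| := by
  rcases le_or_gt x 0 with hx | hx <;> rcases le_or_gt y 0 with hy | hy
  · exact absurd (iff_of_true hx hy) h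
  · rw [abs_of_pos hy, abs_of_nonpos (by linarith)]; linarith
  · rw [abs_of_nonpos hy, abs_of_pos (by linarith)]; linarith
  · exact absurd (iff_of_false hx.not_ge hy.not_ge) h

lemma mem_Icc_of_abs_affine_le {c m u₀ η u : ℝ} (hc : c ≠ 0) (h : |m + c * (u - u₀)| ≤ η) :
    u ∈ Icc (u₀ - m / c - η / |c|) (u₀ - m / c + η / |c|) := by
  have hfactor : m + c * (u - u₀) = c * (u - (u₀ - m / c)) := by field_simp; ring
  rw [hfactor, abs_mul, ← le_div_iff₀' (abs_pos.mpr hc), abs_sub_comm] at h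
  exact mem_Icc_iff_abs_le.mp h

lemma abs_intervalIntegral_le_of_ne_zero_mem_Icc {h : ℝ → ℝ} {a b l r : ℝ} (hab : a ≤ b)
    (hlr : l ≤ r) (hbound : ∀ u ∈ Icc a b, |h u| ≤ 1)
    (hsupp : ∀ u ∈ Icc a b, h u ≠ 0 → u ∈ Icc l r) :
    |∫ u in a..b, h u| ≤ r - l := by
  have hdom : ∀ u ∈ Ioc a b, ‖h u‖ ≤ (Icc l r).indicator 1 u := by
    intro u hu
    by_cases hu0 : h u = 0
    · rw [hu0, norm_zero]
      exact indicator_nonneg (fun _ _ => zero_le_one) u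
    · rw [indicator_of_mem (hsupp u (Ioc_subset_Icc_self hu) hu0)]
      exact hbound u (Ioc_subset_Icc_self hu)
  have hind : IntervalIntegrable ((Icc l r).indicator 1) volume a b :=
    intervalIntegrable_iff.mpr <|
      (integrableOn_const (C := (1 : ℝ)) measure_Ioc_lt_top.ne).indicator measurableSet_Icc
  calc |∫ u in a..b, h u|
      ≤ ∫ u in a..b, (Icc l r).indicator 1 u :=
        intervalIntegral.norm_integral_le_of_norm_le hab (Filter.Eventually.of_forall hdom) hind
    _ = volume.real (Ioc a b ∩ Icc l r) := by
        rw [intervalIntegral.integral_of_le hab, setIntegral_indicator measurableSet_Icc]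
        simp
    _ ≤ volume.real (Icc l r) := measureReal_mono inter_subset_right measure_Icc_lt_top.ne
    _ = r - l := Real.volume_real_Icc_of_le hlr

theorem stmt_4 (f g : ℝ → ℝ) (c m u₀ ε η : ℝ) (hc : c ≠ 0) (hε : 0 < ε) (hη : 0 ≤ η)
    (hclose : ∀ u ∈ Icc (u₀ - ε) (u₀ + ε), |f u - g u| ≤ η)
    (hg : ∀ u, g u = m + c * (u - u₀)) :
    (∃ l r : ℝ, r - l ≤ 2 * η / |c| ∧
        {u ∈ Icc (u₀ - ε) (u₀ + ε) |
          ¬ ((if f u ≤ 0 then (1:ℝ) else 0) = (if g u ≤ 0 then (1:ℝ) else 0))}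
          ⊆ Icc l r) ∧
      |∫ u in (u₀ - ε)..(u₀ + ε),
          ((if f u ≤ 0 then (1:ℝ) else 0) - (if g u ≤ 0 then (1:ℝ) else 0))|
        ≤ 2 * η / |c| := by
  set s := u₀ - m / c
  have hsub : ∀ u ∈ Icc (u₀ - ε) (u₀ + ε),
      ¬((if f u ≤ 0 then (1:ℝ) else 0) = (if g u ≤ 0 then (1:ℝ) else 0)) →
        u ∈ Icc (s - η / |c|) (s + η / |c|) := by
    intro u hu hne
    have hsign : ¬(f u ≤ 0 ↔ g u ≤ 0) := fun hiff => hne (by simp only [hiff])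
    exact mem_Icc_of_abs_affine_le hc <| hg u ▸
      (abs_le_abs_sub_of_not_iff_nonpos hsign).trans (hclose u hu)
  have hlen : s + η / |c| - (s - η / |c|) = 2 * η / |c| := by ring
  refine ⟨⟨_, _, hlen.le, fun u hu => hsub u hu.1 hu.2⟩, hlen ▸ ?_⟩
  have hlr : s - η / |c| ≤ s + η / |c| := by linarith [div_nonneg hη (abs_nonneg c)]
  apply abs_intervalIntegral_le_of_ne_zero_mem_Icc (by linarith) hlr
  · intro u _
    split_ifs <;> norm_num
  · exact fun u hu hne => hsub u hu fun heq => hne (sub_eq_zero.mpr heq)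
end

section
/- Let F : ℝ → [0,1] be a distribution function that is strictly increasing in a neighbourhood of a point q with F(q) = τ, where τ ∈ (0,1). Then: if q > 0 then 1 − F(0) > 1 − τ; if q = 0 then 1 − F(0) = 1 − τ; and if q < 0 then 1 − F(0) < 1 − τ. -/
open Set

theorem stmt_6 (F : ℝ → ℝ) (q τ η : ℝ)
    (hmono : Monotone F) (hrange : ∀ x, F x ∈ Icc (0:ℝ) 1)
    (hτ : τ ∈ Ioo (0:ℝ) 1) (hη : 0 < η)
    (hstrict : StrictMonoOn F (Ioo (q - η) (q + η)))
    (hFq : F q = τ) :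
    (0 < q → 1 - F 0 > 1 - τ) ∧ (q = 0 → 1 - F 0 = 1 - τ) ∧ (q < 0 → 1 - F 0 < 1 - τ) := by
  have hqmem : q ∈ Ioo (q - η) (q + η) := ⟨by linarith, by linarith⟩
  refine ⟨?_, ?_, ?_⟩
  · intro hq
    have : F 0 < τ := by
      by_cases h0 : q - η < 0
      · have := hstrict ⟨h0, by linarith⟩ hqmem hq
        linarith [this, hFq.ge]
      · push_neg at h0
        have hm : q - η/2 ∈ Ioo (q - η) (q + η) := ⟨by linarith, by linarith⟩
        have h1 := hstrict hm hqmem (by linarith)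
        have h2 := hmono (show (0:ℝ) ≤ q - η/2 by linarith)
        linarith [hFq.ge]
    linarith
  · intro hq; rw [← hq, hFq]
  · intro hq
    have : τ < F 0 := by
      by_cases h0 : 0 < q + η
      · have := hstrict hqmem ⟨by linarith, h0⟩ hq
        linarith [this, hFq.ge]
      · push_neg at h0
        have hm : q + η/2 ∈ Ioo (q - η) (q + η) := ⟨by linarith, by linarith⟩
        have h1 := hstrict hqmem hm (by linarith)
        have h2 := hmono (show q + η/2 ≤ (0:ℝ) by linarith)
        linarith [hFq.ge]
    linarith
end

section
/- Let K : ℝ → ℝ be integrable with ∫ K(v) dv = 1 and 𝒦(u) := ∫_{-∞}^{u} K(v) dv, and suppose sup_{|v| ≥ c} |𝒦(v) − 1{v ≥ 0}| → 0 as c → ∞. Let β ∈ ℝ^{d+1}, h_n → 0, c_n → ∞ with c_n h_n → 0. Then for any bounded random vector W with an atomless distribution of β^T W, E[|𝒦(β^T W / h_n) − 1{β^T W ≥ 0}|] → 0 as n → ∞. -/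
/-! Off the null event `{β ᵀ W = 0}`, the argument `β ᵀ W / h n` of the smoothed step
escapes to `±∞`, where the tail condition makes `𝒦` agree with the hard step up to `ε`;
since the integrand is bounded by `‖K‖₁ + 1`, dominated convergence finishes the proof. -/

open MeasureTheory Filter Set Topology

theorem MeasureTheory.Integrable.continuous_integral_Iic {K : ℝ → ℝ} (hK : Integrable K) :
    Continuous fun u => ∫ v in Iic u, K v :=
  continuous_iff_continuousAt.2 fun u =>
    (hK.integrableOn.continuousOn_Iic_primitive_Iic (a₀ := u + 1)).continuousAt
      (Iic_mem_nhds (lt_add_one u))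

theorem MeasureTheory.Integrable.abs_integral_Iic_sub_step_le {K : ℝ → ℝ} (hK : Integrable K)
    (u : ℝ) : |(∫ v in Iic u, K v) - (if 0 ≤ u then (1:ℝ) else 0)| ≤ (∫ v, |K v|) + 1 := by
  have hprim : |∫ v in Iic u, K v| ≤ ∫ v, |K v| :=
    abs_integral_le_integral_abs.trans
      (setIntegral_le_integral hK.abs (ae_of_all _ fun v => abs_nonneg _))
  have hstep : |(if 0 ≤ u then (1:ℝ) else 0)| ≤ 1 := by split_ifs <;> simp
  exact (abs_sub _ _).trans (add_le_add hprim hstep)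

theorem step_div_of_pos (x : ℝ) {t : ℝ} (ht : 0 < t) :
    (if 0 ≤ x / t then (1:ℝ) else 0) = if 0 ≤ x then 1 else 0 := by
  simp only [le_div_iff₀ ht, zero_mul]

theorem tendsto_sub_step_div_nhdsGT_zero {F : ℝ → ℝ}
    (htail : ∀ ε > 0, ∃ c : ℝ, ∀ v : ℝ, c ≤ |v| →
      |F v - (if 0 ≤ v then (1:ℝ) else 0)| ≤ ε)
    {x : ℝ} (hx : x ≠ 0) :
    Tendsto (fun t => F (x / t) - (if 0 ≤ x then (1:ℝ) else 0)) (𝓝[>] 0) (𝓝 0) := by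
  have habs : Tendsto (fun t => |x / t|) (𝓝[>] 0) atTop := by
    refine (tendsto_inv_nhdsGT_zero.const_mul_atTop (abs_pos.2 hx)).congr' ?_
    filter_upwards [self_mem_nhdsWithin] with t (ht : 0 < t)
    rw [abs_div, abs_of_pos ht, div_eq_mul_inv]
  rw [Metric.tendsto_nhds]
  intro ε hε
  obtain ⟨c, hc⟩ := htail (ε / 2) (half_pos hε)
  filter_upwards [habs.eventually_ge_atTop c, self_mem_nhdsWithin] with t hct (ht : 0 < t)
  rw [Real.dist_eq, sub_zero, ← step_div_of_pos x ht]
  exact (hc _ hct).trans_lt (half_lt_self hε)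

theorem tendsto_integral_abs_comp_div_sub_step {Ω : Type*} [MeasurableSpace Ω]
    {μ : Measure Ω} [IsFiniteMeasure μ] {X : Ω → ℝ} (hX : Measurable X)
    (hX0 : μ {ω | X ω = 0} = 0) {F : ℝ → ℝ} (hF : Measurable F) {C : ℝ}
    (hbdd : ∀ u, |F u - (if 0 ≤ u then (1:ℝ) else 0)| ≤ C)
    (htail : ∀ ε > 0, ∃ c : ℝ, ∀ v : ℝ, c ≤ |v| →
      |F v - (if 0 ≤ v then (1:ℝ) else 0)| ≤ ε) :
    Tendsto (fun t => ∫ ω, |F (X ω / t) - (if 0 ≤ X ω then (1:ℝ) else 0)| ∂μ)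
      (𝓝[>] 0) (𝓝 0) := by
  have hstep : Measurable fun ω => if 0 ≤ X ω then (1:ℝ) else 0 :=
    Measurable.ite (measurableSet_le measurable_const hX) measurable_const measurable_const
  have hX_ne : ∀ᵐ ω ∂μ, X ω ≠ 0 := (measure_eq_zero_iff_ae_notMem.1 hX0).mono fun _ h => h
  have hlim := tendsto_integral_filter_of_dominated_convergence (μ := μ) (l := 𝓝[>] (0:ℝ))
    (f := fun _ => (0:ℝ)) (fun _ => C)
    (Eventually.of_forall fun t =>
      (continuous_abs.measurable.comp ((hF.comp (hX.div_const t)).sub hstep)).aestronglyMeasurable)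
    (eventually_mem_nhdsWithin.mono fun t (ht : 0 < t) => ae_of_all _ fun ω => by
      simpa [step_div_of_pos _ ht] using hbdd (X ω / t))
    (integrable_const C)
    (hX_ne.mono fun ω hω => by simpa using (tendsto_sub_step_div_nhdsGT_zero htail hω).abs)
  simpa using hlim

theorem stmt_9_general {Ω : Type*} [MeasureSpace Ω] (μ : Measure Ω) [IsProbabilityMeasure μ]
    (d : ℕ) (W : Ω → Fin (d + 1) → ℝ) (hWmeas : Measurable W)
    (β : Fin (d + 1) → ℝ)
    (hatomless : ∀ t : ℝ, μ {ω | ∑ i, β i * W ω i = t} = 0)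
    (K : ℝ → ℝ) (hK : Integrable K)
    (𝒦 : ℝ → ℝ) (h𝒦 : ∀ u, 𝒦 u = ∫ v in Iic u, K v)
    (htail : ∀ ε > 0, ∃ c : ℝ, ∀ v : ℝ, c ≤ |v| →
      |𝒦 v - (if 0 ≤ v then (1:ℝ) else 0)| ≤ ε)
    (h c : ℕ → ℝ) (hpos : ∀ n, 0 < h n)
    (hh : Tendsto h atTop (nhds 0)) :
    Tendsto (fun n => ∫ ω, |𝒦 ((∑ i, β i * W ω i) / h n) -
        (if 0 ≤ ∑ i, β i * W ω i then (1:ℝ) else 0)| ∂μ) atTop (nhds 0) := by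
  obtain rfl : 𝒦 = fun u => ∫ v in Iic u, K v := funext h𝒦
  have hX : Measurable fun ω => ∑ i, β i * W ω i :=
    Finset.measurable_sum _ fun i _ => measurable_const.mul ((measurable_pi_apply i).comp hWmeas)
  have hh' : Tendsto h atTop (𝓝[>] 0) :=
    tendsto_nhdsWithin_iff.2 ⟨hh, Eventually.of_forall hpos⟩
  exact (tendsto_integral_abs_comp_div_sub_step hX (hatomless 0)
    hK.continuous_integral_Iic.measurable hK.abs_integral_Iic_sub_step_le htail).comp hh'

theorem stmt_9 {Ω : Type*} [MeasureSpace Ω] (μ : Measure Ω) [IsProbabilityMeasure μ]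
    (d : ℕ) (W : Ω → Fin (d + 1) → ℝ) (hWmeas : Measurable W)
    (hWbdd : ∃ M : ℝ, ∀ ω i, |W ω i| ≤ M)
    (β : Fin (d + 1) → ℝ)
    (hatomless : ∀ t : ℝ, μ {ω | ∑ i, β i * W ω i = t} = 0)
    (K : ℝ → ℝ) (hK : Integrable K) (hK1 : ∫ v, K v = 1)
    (𝒦 : ℝ → ℝ) (h𝒦 : ∀ u, 𝒦 u = ∫ v in Iic u, K v)
    (htail : ∀ ε > 0, ∃ c : ℝ, ∀ v : ℝ, c ≤ |v| →
      |𝒦 v - (if 0 ≤ v then (1:ℝ) else 0)| ≤ ε)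
    (h c : ℕ → ℝ) (hpos : ∀ n, 0 < h n)
    (hh : Tendsto h atTop (nhds 0)) (hc : Tendsto c atTop atTop)
    (hch : Tendsto (fun n => c n * h n) atTop (nhds 0)) :
    Tendsto (fun n => ∫ ω, |𝒦 ((∑ i, β i * W ω i) / h n) -
        (if 0 ≤ ∑ i, β i * W ω i then (1:ℝ) else 0)| ∂μ) atTop (nhds 0) :=
  stmt_9_general μ d W hWmeas β hatomless K hK 𝒦 h𝒦 htail h c hpos hh
end

section
/- Let g, h : [0,1] → ℝ, u₀ ∈ (0,1), and suppose g(u₀) = 0, g is differentiable at u₀ with g'(u₀) > 0, and there exist r > 0 and a modulus ξ ≥ 0 such that sup_{|u−u₀| ≤ r}|h(u) − g(u) − (h(u₀) − g(u₀))| ≤ ξ and sup_{|u−u₀|≤r}|g(u) − g'(u₀)(u−u₀)| ≤ ρ. If u* ∈ [u₀ − r, u₀ + r] satisfies h(u*) = 0, then |u* − u₀ + h(u₀)/g'(u₀)| ≤ (ξ + 2ρ)/g'(u₀). -/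
open Set

theorem stmt_17 (g h : ℝ → ℝ) (u₀ c r ξ ρ ustar : ℝ)
    (hu₀ : u₀ ∈ Ioo (0:ℝ) 1) (hg0 : g u₀ = 0)
    (hderiv : HasDerivAt g c u₀) (hc : 0 < c)
    (hr : 0 < r) (hξ : 0 ≤ ξ) (hρ : 0 ≤ ρ)
    (hincr : ∀ u, |u - u₀| ≤ r → |h u - g u - (h u₀ - g u₀)| ≤ ξ)
    (hlin : ∀ u, |u - u₀| ≤ r → |g u - c * (u - u₀)| ≤ ρ)
    (hustar : |ustar - u₀| ≤ r) (hzero : h ustar = 0) :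
    |ustar - u₀ + h u₀ / c| ≤ (ξ + 2 * ρ) / c := by
  have h1 := hincr ustar hustar
  have h2 := hlin ustar hustar
  rw [hzero, hg0] at h1
  have key : |c * (ustar - u₀) + h u₀| ≤ ξ + ρ := by
    have : c * (ustar - u₀) + h u₀ = -(0 - g ustar - (h u₀ - 0)) - (g ustar - c * (ustar - u₀)) := by ring
    rw [this]
    calc _ ≤ |(-(0 - g ustar - (h u₀ - 0)))| + |g ustar - c * (ustar - u₀)| := abs_sub _ _
    _ ≤ ξ + ρ := by rw [abs_neg]; exact add_le_add h1 h2
  have heq : ustar - u₀ + h u₀ / c = (c * (ustar - u₀) + h u₀) / c := by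
    field_simp
  rw [heq, abs_div, abs_of_pos hc]
  gcongr
  linarith
end
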